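/- Fix 1 ≤ i ≤ s, and let f_i ∈ ℂ[x,y] be a Weierstrass polynomial in y of degree e_i with ι_i^* f_i = 0 and Supp(f_i) ⊆ N_i. If g ∈ ℂ[x,y] is a nonzero polynomial with ι_i^* g = 0 and Supp(g) ⊆ N_i, then there exists a nonzero a ∈ ℂ such that g = a·f_i. -/

import Mathlib

/-!
The second inequality defining `N_i` (with `μ_i > 0`) bounds the `y`-degree of `g` by `e_i` and
forces the coefficient of `y ^ e_i` in `g` to be a constant. Dividing `g` by the monic `f_i`
therefore gives `g = a(x) f_i + r` with `a` constant and `deg_y r < e_i`, `ι_i^* r = 0`, and it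
remains to see that such an `r` is zero. If `ι_i^* r = 0`, every conjugate `y_i(ζ t)` with
`ζ ^ e_i = 1` is a root of `r(t ^ e_i, y)`. These `e_i` conjugates are pairwise distinct: a `ζ`
fixing `y_i` has `ζ ^ e_i = 1` and `ζ ^ (e_i λ_ℓ) = 1` (the exponents of the `c_ℓ`-terms), and
`1 / e_i ∈ M_i` turns these into `ζ = 1`. That `M_i = (1 / e_i) ℤ` follows by induction, `k_i`
being the denominator of `e_{i-1} λ_i`.
-/

noncomputable def pOrdQ (p : Polynomial ℂ) : WithTop ℚ :=
  WithTop.map (fun m : ℕ => (m : ℚ)) p.trailingDegree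

/-- Truncated parametrization pullback on ℂ[x][y]: x ↦ t^e, y ↦ yi. -/
noncomputable def iotaP (e : ℕ) (yi : Polynomial ℂ) (g : Polynomial (Polynomial ℂ)) :
    Polynomial ℂ :=
  Polynomial.eval₂ (Polynomial.aeval (Polynomial.X ^ e : Polynomial ℂ)).toRingHom yi g

open Polynomial

theorem strictMonoOn_Icc_of_lt_add_one {α : Type*} [Preorder α] {f : ℕ → α} {a b : ℕ}
    (hf : ∀ i, a ≤ i → i < b → f i < f (i + 1)) : StrictMonoOn f (Set.Icc a b) :=
  strictMonoOn_of_lt_succ Set.ordConnected_Icc fun i _ hi hi' =>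
    hf i hi.1 (by simpa [Order.succ_eq_add_one] using hi'.2)

theorem Rat.den_dvd_iff_exists_intCast_eq_mul (ρ : ℚ) (m : ℤ) :
    (ρ.den : ℤ) ∣ m ↔ ∃ z : ℤ, (z : ℚ) = m * ρ := by
  have hρ : (ρ.den : ℚ) * ρ = ρ.num := by rw [mul_comm]; exact_mod_cast Rat.mul_den_eq_num ρ
  constructor
  · rintro ⟨t, rfl⟩
    exact ⟨t * ρ.num, by push_cast; rw [← hρ]; ring⟩
  · rintro ⟨z, hz⟩
    have hcop : IsCoprime (ρ.den : ℤ) ρ.num := by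
      rw [Int.isCoprime_iff_gcd_eq_one, Int.gcd]
      simpa [Nat.coprime_comm] using ρ.reduced
    refine hcop.dvd_of_dvd_mul_right ⟨z, ?_⟩
    exact_mod_cast (by push_cast; rw [← hρ, hz]; ring : ((m * ρ.num : ℤ) : ℚ) = ρ.den * z)

theorem AddSubgroup.mem_zmultiples_natCast_inv_iff {n : ℕ} (hn : n ≠ 0) {q : ℚ} :
    q ∈ AddSubgroup.zmultiples (n : ℚ)⁻¹ ↔ ∃ z : ℤ, (z : ℚ) = n * q := by
  simp only [AddSubgroup.mem_zmultiples_iff, zsmul_eq_mul]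
  refine exists_congr fun z => ?_
  constructor <;> intro h
  · rw [← h]; field_simp
  · rw [h]; field_simp

theorem isLeast_den_mul_mem_zmultiples {n : ℕ} (hn : n ≠ 0) (q : ℚ) :
    IsLeast {m : ℕ | 0 < m ∧ (m : ℚ) * q ∈ AddSubgroup.zmultiples (n : ℚ)⁻¹}
      ((n : ℚ) * q).den := by
  have hmem : ∀ m : ℕ, (m : ℚ) * q ∈ AddSubgroup.zmultiples (n : ℚ)⁻¹ ↔
      ((n : ℚ) * q).den ∣ m := by
    intro m
    rw [AddSubgroup.mem_zmultiples_natCast_inv_iff hn, ← Int.natCast_dvd_natCast,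
      Rat.den_dvd_iff_exists_intCast_eq_mul]
    push_cast
    simp only [mul_left_comm]
  refine ⟨⟨Rat.den_pos _, (hmem _).2 dvd_rfl⟩, fun m ⟨hm, hmq⟩ => ?_⟩
  exact Nat.le_of_dvd hm ((hmem m).1 hmq)

theorem zmultiples_natCast_inv_sup_zmultiples {n : ℕ} (hn : n ≠ 0) (q : ℚ) :
    AddSubgroup.zmultiples (n : ℚ)⁻¹ ⊔ AddSubgroup.zmultiples q =
      AddSubgroup.zmultiples (((n * ((n : ℚ) * q).den : ℕ) : ℚ)⁻¹) := by
  set ρ := (n : ℚ) * q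
  have hρ : (ρ.den : ℚ) * ρ = ρ.num := by rw [mul_comm]; exact_mod_cast Rat.mul_den_eq_num ρ
  have hq : q = ρ.num * ((n * ρ.den : ℕ) : ℚ)⁻¹ := by
    rw [← hρ]; push_cast; field_simp; ring
  apply le_antisymm
  · refine sup_le (AddSubgroup.zmultiples_le_of_mem ?_) (AddSubgroup.zmultiples_le_of_mem ?_)
    · exact ⟨ρ.den, by simp only [zsmul_eq_mul]; push_cast; field_simp⟩
    · exact ⟨ρ.num, by simp only [zsmul_eq_mul]; rw [← hq]⟩
  · obtain ⟨u, v, huv⟩ : IsCoprime ρ.num (ρ.den : ℤ) := by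
      rw [Int.isCoprime_iff_gcd_eq_one, Int.gcd]
      simpa using ρ.reduced
    have hgen : ((n * ρ.den : ℕ) : ℚ)⁻¹ = u • q + v • (n : ℚ)⁻¹ := by
      have huvQ : (u : ℚ) * ρ.num + v * ρ.den = 1 := by exact_mod_cast huv
      rw [zsmul_eq_mul, zsmul_eq_mul, hq]
      push_cast
      field_simp
      linear_combination -huvQ
    refine AddSubgroup.zmultiples_le_of_mem ?_
    rw [hgen]
    exact add_mem (AddSubgroup.zsmul_mem _ (AddSubgroup.mem_sup_right
      (AddSubgroup.mem_zmultiples q)) u) (AddSubgroup.zsmul_mem _ (AddSubgroup.mem_sup_left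
      (AddSubgroup.mem_zmultiples _)) v)

theorem closure_union_image_Icc_add_one {G : Type*} [AddGroup G] (S : Set G) (lam : ℕ → G)
    {a j : ℕ} (haj : a ≤ j + 1) :
    AddSubgroup.closure (S ∪ lam '' Set.Icc a (j + 1)) =
      AddSubgroup.closure (S ∪ lam '' Set.Icc a j) ⊔ AddSubgroup.zmultiples (lam (j + 1)) := by
  have hIcc : insert (j + 1) (Set.Icc a j) = Set.Icc a (j + 1) :=
    Set.insert_Icc_right_eq_Icc_succ (b := j) haj
  rw [← hIcc, Set.image_insert_eq,
    Set.union_insert, ← Set.singleton_union, AddSubgroup.closure_union, sup_comm,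
    AddSubgroup.zmultiples_eq_closure]

theorem pos_of_eq_mul_pred {e k : ℕ → ℕ} {s : ℕ}
    (he : ∀ i, 1 ≤ i → i ≤ s → e i = k i * e (i - 1)) (he0 : e 0 = 1)
    (hk : ∀ i, 1 ≤ i → i ≤ s → 0 < k i) : ∀ j ≤ s, 0 < e j := by
  intro j
  induction j with
  | zero => simp [he0]
  | succ j ih =>
    intro hj
    rw [he (j + 1) (by omega) hj, Nat.add_sub_cancel]
    exact Nat.mul_pos (hk _ (by omega) hj) (ih (by omega))

theorem dvd_of_eq_mul_pred {e k : ℕ → ℕ} {s i j : ℕ}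
    (he : ∀ i, 1 ≤ i → i ≤ s → e i = k i * e (i - 1)) (hij : i ≤ j) (hj : j ≤ s) : e i ∣ e j := by
  induction j, hij using Nat.le_induction with
  | base => rfl
  | succ j hij ih =>
    rw [he (j + 1) (by omega) hj, Nat.add_sub_cancel]
    exact (ih (by omega)).mul_left _

theorem eq_zmultiples_inv_of_isLeast {M : ℕ → AddSubgroup ℚ} {lam : ℕ → ℚ} {kk e : ℕ → ℕ}
    {s : ℕ} (hM : ∀ i, M i = AddSubgroup.closure ({1} ∪ lam '' Set.Icc 1 i))
    (hkk : ∀ i, 1 ≤ i → i ≤ s →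
      IsLeast {m : ℕ | 0 < m ∧ (m : ℚ) * lam i ∈ M (i - 1)} (kk i))
    (he0 : e 0 = 1) (he : ∀ i, 1 ≤ i → i ≤ s → e i = kk i * e (i - 1)) :
    ∀ j ≤ s, M j = AddSubgroup.zmultiples (e j : ℚ)⁻¹ := by
  have hepos := pos_of_eq_mul_pred he he0 fun i h1 h2 => (hkk i h1 h2).1.1
  intro j
  induction j with
  | zero =>
    intro _
    rw [hM, he0, Set.Icc_eq_empty (by norm_num), Set.image_empty, Set.union_empty,
      ← AddSubgroup.zmultiples_eq_closure, Nat.cast_one, inv_one]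
  | succ j ih =>
    intro hj
    have hej : e j ≠ 0 := (hepos j (by omega)).ne'
    have hk := hkk (j + 1) (by omega) hj
    rw [Nat.add_sub_cancel, ih (by omega)] at hk
    rw [he (j + 1) (by omega) hj, Nat.add_sub_cancel,
      hk.unique (isLeast_den_mul_mem_zmultiples hej _), mul_comm, hM,
      closure_union_image_Icc_add_one _ _ (by omega), ← hM, ih (by omega),
      zmultiples_natCast_inv_sup_zmultiples hej]

theorem eq_one_of_forall_pow_eq_one_of_inv_mem_closure {G : Type*} [Monoid G] {S : Set ℚ}
    {e : ℕ} (he : e ≠ 0) (hS : (e : ℚ)⁻¹ ∈ AddSubgroup.closure S) {ζ : G}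
    (hζ : ∀ q ∈ S, ∃ m : ℕ, (m : ℚ) = e * q ∧ ζ ^ m = 1) : ζ = 1 := by
  have hle : AddSubgroup.closure S ≤ AddSubgroup.zmultiples ((orderOf ζ : ℚ) / e) := by
    refine (AddSubgroup.closure_le _).2 fun q hq => ?_
    obtain ⟨m, hm, hζm⟩ := hζ q hq
    obtain ⟨t, rfl⟩ := orderOf_dvd_of_pow_eq_one hζm
    exact ⟨t, by simp only [zsmul_eq_mul]; field_simp; push_cast at hm ⊢; linarith⟩
  obtain ⟨z, hz⟩ := hle hS
  have hzd : z * (orderOf ζ : ℤ) = 1 := by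
    simp only [zsmul_eq_mul] at hz
    field_simp at hz
    exact_mod_cast hz
  have hd : orderOf ζ = 1 := by
    have := Int.eq_one_of_mul_eq_one_left (Int.natCast_nonneg _) hzd
    exact_mod_cast this
  exact orderOf_eq_one_iff.1 hd

theorem Polynomial.comp_C_mul_X_comp_C_mul_X {R : Type*} [CommSemiring R] (p : R[X]) (a b : R) :
    (p.comp (C a * X)).comp (C b * X) = p.comp (C (a * b) * X) := by
  rw [comp_assoc, mul_comp, C_comp, X_comp, C_mul, mul_assoc]

theorem Polynomial.coeff_sum_C_mul_X_pow_add {R : Type*} [Semiring R] {a b : ℕ} {E : ℕ → ℕ}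
    (hE : StrictMonoOn E (Set.Icc a b)) (c : ℕ → R) (ψ : ℕ → R[X])
    (hψ : ∀ ℓ ∈ Set.Icc a b, ∀ m ∈ (ψ ℓ).support, E ℓ < m ∧ (ℓ < b → m < E (ℓ + 1)))
    {ℓ : ℕ} (hℓ : ℓ ∈ Set.Icc a b) :
    (∑ ℓ' ∈ Finset.Icc a b, (C (c ℓ') * X ^ E ℓ' + ψ ℓ')).coeff (E ℓ) = c ℓ := by
  have hψℓ : ∀ ℓ' ∈ Set.Icc a b, (ψ ℓ').coeff (E ℓ) = 0 := by
    intro ℓ' hℓ'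
    by_contra hne
    obtain ⟨hlo, hhi⟩ := hψ ℓ' hℓ' _ (mem_support_iff.2 hne)
    have hlt : ℓ' < ℓ := (hE.lt_iff_lt hℓ' hℓ).1 hlo
    have hsucc : ℓ' + 1 ∈ Set.Icc a b := ⟨hℓ'.1.trans (Nat.le_succ _), hlt.trans_le hℓ.2⟩
    have := (hE.lt_iff_lt hℓ hsucc).1 (hhi (hlt.trans_le hℓ.2))
    omega
  rw [finsetSum_coeff, Finset.sum_eq_single ℓ]
  · rw [coeff_add, coeff_C_mul_X_pow, if_pos rfl, hψℓ ℓ hℓ, add_zero]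
  · intro ℓ' hℓ' hne
    have hℓ'' : ℓ' ∈ Set.Icc a b := Finset.mem_Icc.1 hℓ'
    rw [coeff_add, coeff_C_mul_X_pow, hψℓ ℓ' hℓ'', add_zero,
      if_neg fun h => hne (hE.injOn hℓ'' hℓ h.symm)]
  · intro h
    exact absurd (Finset.mem_Icc.2 hℓ) h

theorem Polynomial.natDegree_pos_of_comp_X_pow_eq {R : Type*} [CommSemiring R] {p q : R[X]}
    {r : ℕ} (h : q.comp (X ^ r) = p) (hp0 : p.coeff 0 = 0) (hp : p ≠ 0) : 0 < q.natDegree := by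
  refine Nat.pos_of_ne_zero fun hq => hp ?_
  rw [eq_C_of_natDegree_eq_zero hq, C_comp] at h
  subst h
  simpa using hp0

theorem Polynomial.eq_C_coeff_mul_of_map_eq_zero {R S : Type*} [CommRing R] [Ring S]
    (ψ : R[X] →+* S) {f g : R[X]} (hf : f.Monic) (hψf : ψ f = 0) (hψg : ψ g = 0)
    (hg : g.natDegree ≤ f.natDegree)
    (hker : ∀ r : R[X], r.natDegree < f.natDegree → ψ r = 0 → r = 0) :
    g = C (g.coeff f.natDegree) * f := by
  nontriviality R
  have hmod : g %ₘ f = 0 := by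
    by_contra hne
    refine hne (hker _ (natDegree_lt_natDegree hne (degree_modByMonic_lt g hf)) ?_)
    rw [modByMonic_eq_sub_mul_div, map_sub, map_mul, hψf, hψg, zero_mul, sub_self]
  obtain ⟨q, rfl⟩ := (modByMonic_eq_zero_iff_dvd hf).1 hmod
  rcases eq_or_ne q 0 with rfl | hq
  · simp
  have hq0 : q.natDegree = 0 := by have := hf.natDegree_mul' hq; omega
  rw [eq_C_of_natDegree_eq_zero hq0, coeff_mul_C, hf.coeff_natDegree, one_mul, mul_comm]

theorem Polynomial.natDegree_le_and_coeff_eq_C_of_weighted_le {R : Type*} [Semiring R]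
    {g : R[X][X]} {n : ℕ} {μ : ℚ} (hμ : 0 < μ)
    (hg : ∀ α β : ℕ, (g.coeff β).coeff α ≠ 0 → (α : ℚ) + μ * β ≤ μ * n) :
    g.natDegree ≤ n ∧ g.coeff n = C ((g.coeff n).coeff 0) := by
  constructor
  · refine natDegree_le_iff_coeff_eq_zero.2 fun β hβ => ?_
    by_contra hne
    obtain ⟨α, hα⟩ : ∃ α, (g.coeff β).coeff α ≠ 0 := by
      by_contra! h
      exact hne (ext fun α => by simp [h])
    have := hg α β hα
    have : (n : ℚ) < β := by exact_mod_cast hβ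
    nlinarith [(α.cast_nonneg : (0 : ℚ) ≤ α)]
  · refine eq_C_of_natDegree_eq_zero (Nat.le_zero.1 (natDegree_le_iff_coeff_eq_zero.2 ?_))
    intro α hα
    by_contra hne
    have := hg α n hne
    have : (0 : ℚ) < α := by exact_mod_cast hα
    linarith

theorem coeff_sum_C_mul_X_pow_add_of_comp_X_pow_eq {R : Type*} [CommSemiring R]
    {s i n N : ℕ} {lam : ℕ → ℚ} {E : ℕ → ℕ} {φ ψ : ℕ → R[X]} (c : ℕ → R) (his : i ≤ s)
    (hlam : StrictMonoOn lam (Set.Icc 1 s)) (hn : 0 < n) (hN : 0 < N) (hnN : n ∣ N)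
    (hφord : ∀ ℓ, 1 ≤ ℓ → ℓ ≤ s → ∀ a ∈ (φ ℓ).support, (N : ℚ) * lam ℓ < a)
    (hφdeg : ∀ ℓ, 1 ≤ ℓ → ℓ < s → ∀ a ∈ (φ ℓ).support, (a : ℚ) < N * lam (ℓ + 1))
    (hE : ∀ ℓ, 1 ≤ ℓ → ℓ ≤ i → (E ℓ : ℚ) = n * lam ℓ)
    (hψ : ∀ ℓ, 1 ≤ ℓ → ℓ ≤ i → (ψ ℓ).comp (X ^ (N / n)) = φ ℓ) {ℓ : ℕ}
    (hℓ : ℓ ∈ Set.Icc 1 i) :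
    (∑ ℓ' ∈ Finset.Icc 1 i, (C (c ℓ') * X ^ E ℓ' + ψ ℓ')).coeff (E ℓ) = c ℓ := by
  obtain ⟨r, rfl⟩ := hnN
  rw [Nat.mul_div_cancel_left r hn] at hψ
  have hrQ : (0 : ℚ) < r := by exact_mod_cast Nat.pos_of_mul_pos_left hN
  have hscale : ∀ k, 1 ≤ k → k ≤ i → ((n * r : ℕ) : ℚ) * lam k = (E k : ℚ) * r := by
    intro k hk1 hk2
    rw [hE k hk1 hk2]; push_cast; ring
  have hEmono : StrictMonoOn E (Set.Icc 1 i) := by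
    intro a ha b hb hab
    have hlt : (n : ℚ) * lam a < n * lam b :=
      mul_lt_mul_of_pos_left (hlam ⟨ha.1, ha.2.trans his⟩ ⟨hb.1, hb.2.trans his⟩ hab)
        (by exact_mod_cast hn)
    rw [← hE a ha.1 ha.2, ← hE b hb.1 hb.2] at hlt
    exact_mod_cast hlt
  refine coeff_sum_C_mul_X_pow_add hEmono c ψ (fun k hk m hm => ?_) hℓ
  have hmφ : m * r ∈ (φ k).support := by
    rw [mem_support_iff, ← hψ k hk.1 hk.2, ← expand_eq_comp_X_pow,
      coeff_expand_mul (Nat.pos_of_mul_pos_left hN)]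
    exact mem_support_iff.1 hm
  constructor
  · have := hφord k hk.1 (hk.2.trans his) _ hmφ
    rw [hscale k hk.1 hk.2] at this
    push_cast at this
    exact_mod_cast (mul_lt_mul_iff_left₀ hrQ).1 this
  · intro hki
    have := hφdeg k hk.1 (by omega) _ hmφ
    rw [hscale (k + 1) (by omega) hki] at this
    push_cast at this
    exact_mod_cast (mul_lt_mul_iff_left₀ hrQ).1 this

theorem eq_one_of_comp_C_mul_X_eq_self {p : ℂ[X]} {e i : ℕ} {lam : ℕ → ℚ} {E : ℕ → ℕ}
    (he : e ≠ 0) (hmem : (e : ℚ)⁻¹ ∈ AddSubgroup.closure ({1} ∪ lam '' Set.Icc 1 i))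
    (hE : ∀ ℓ, 1 ≤ ℓ → ℓ ≤ i → (E ℓ : ℚ) = e * lam ℓ) (hp : ∀ ℓ ∈ Set.Icc 1 i, p.coeff (E ℓ) ≠ 0)
    {ζ : ℂ} (hζ : ζ ^ e = 1) (hfix : p.comp (C ζ * X) = p) : ζ = 1 := by
  refine eq_one_of_forall_pow_eq_one_of_inv_mem_closure he hmem ?_
  rintro q (rfl | ⟨ℓ, hℓ, rfl⟩)
  · exact ⟨e, by simp, hζ⟩
  · refine ⟨E ℓ, hE ℓ hℓ.1 hℓ.2, ?_⟩
    have := congrArg (coeff · (E ℓ)) hfix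
    simpa [hp ℓ hℓ] using this

theorem iotaP_eq_eval_map_expand (n : ℕ) (p : ℂ[X]) (r : ℂ[X][X]) :
    iotaP n p r = (r.map (expand ℂ n)).eval p := by
  rw [eval_map]
  rfl

theorem iotaP_comp_C_mul_X {n : ℕ} {ζ : ℂ} (hζ : ζ ^ n = 1) (p : ℂ[X]) (r : ℂ[X][X]) :
    (iotaP n p r).comp (C ζ * X) = iotaP n (p.comp (C ζ * X)) r := by
  have hfix : (compRingHom (C ζ * X)).comp (aeval (R := ℂ) (X ^ n : ℂ[X])).toRingHom =
      (aeval (R := ℂ) (X ^ n : ℂ[X])).toRingHom := by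
    refine ringHom_ext (fun a => by simp) ?_
    simp [mul_pow, ← C_pow, hζ]
  rw [iotaP, iotaP, ← coe_compRingHom_apply, hom_eval₂, hfix, coe_compRingHom_apply]

theorem eq_zero_of_iotaP_eq_zero {n : ℕ} (hn : 0 < n) {p : ℂ[X]}
    (hp : ∀ ζ : ℂ, ζ ^ n = 1 → p.comp (C ζ * X) = p → ζ = 1) {r : ℂ[X][X]}
    (hr : r.natDegree < n) (h : iotaP n p r = 0) : r = 0 := by
  obtain ⟨ζ, hζ⟩ : ∃ ζ : ℂ, IsPrimitiveRoot ζ n := ⟨_, Complex.isPrimitiveRoot_exp n hn.ne'⟩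
  have hζ0 : ζ ≠ 0 := hζ.ne_zero hn.ne'
  set conj : Fin n → ℂ[X] := fun j => p.comp (C (ζ ^ (j : ℕ)) * X)
  have hconj : Function.Injective conj := by
    intro j₁ j₂ hj
    have hfix : p.comp (C (ζ ^ (j₂ : ℕ) * (ζ ^ (j₁ : ℕ))⁻¹) * X) = p := by
      have := congrArg (fun q => q.comp (C (ζ ^ (j₁ : ℕ))⁻¹ * X)) hj
      simp only [conj, comp_C_mul_X_comp_C_mul_X] at this
      rw [← this, mul_inv_cancel₀ (pow_ne_zero _ hζ0), C_1, one_mul, comp_X]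
    have hpow : (ζ ^ (j₂ : ℕ) * (ζ ^ (j₁ : ℕ))⁻¹) ^ n = 1 := by
      simp [mul_pow, ← pow_mul, pow_mul', hζ.pow_eq_one]
    have := hp _ hpow hfix
    exact Fin.ext (hζ.pow_inj j₁.isLt j₂.isLt (mul_inv_eq_one₀ (pow_ne_zero _ hζ0) |>.1 this).symm)
  have hroots : ∀ j, (r.map (expand ℂ n)).eval (conj j) = 0 := by
    intro j
    have hζj : (ζ ^ (j : ℕ)) ^ n = 1 := by rw [← pow_mul, mul_comm, pow_mul, hζ.pow_eq_one, one_pow]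
    rw [← iotaP_eq_eval_map_expand, ← iotaP_comp_C_mul_X hζj, h, zero_comp]
  have hmap := eq_zero_of_natDegree_lt_card_of_eval_eq_zero _ hconj hroots
    (by simpa using natDegree_map_le.trans_lt hr)
  exact map_injective _ (expand_injective hn) (hmap.trans (Polynomial.map_zero _).symm)

theorem stmt_12_general
    (s : ℕ)
    (lam : ℕ → ℚ) (hlam1 : 1 < lam 1)
    (hlam_mono : ∀ i, 1 ≤ i → i < s → lam i < lam (i + 1))
    (M : ℕ → AddSubgroup ℚ)
    (hM : ∀ i, M i = AddSubgroup.closure ({1} ∪ lam '' Set.Icc 1 i))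
    (kk : ℕ → ℕ)
    (hkk : ∀ i, 1 ≤ i → i ≤ s →
      IsLeast {m : ℕ | 0 < m ∧ (m : ℚ) * lam i ∈ M (i - 1)} (kk i))
    (e : ℕ → ℕ) (he0 : e 0 = 1)
    (he : ∀ i, 1 ≤ i → i ≤ s → e i = kk i * e (i - 1))
    (c : ℕ → ℂ) (hc : ∀ ℓ, 1 ≤ ℓ → ℓ ≤ s → c ℓ ≠ 0)
    (φ : ℕ → Polynomial ℂ)
    (hφ0 : ∀ ℓ, 1 ≤ ℓ → ℓ ≤ s → (φ ℓ).coeff 0 = 0)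
    (hφord : ∀ ℓ, 1 ≤ ℓ → ℓ ≤ s → ∀ a ∈ (φ ℓ).support, (e s : ℚ) * lam ℓ < (a : ℚ))
    (hφdeg : ∀ ℓ, 1 ≤ ℓ → ℓ < s → ∀ a ∈ (φ ℓ).support, (a : ℚ) < (e s : ℚ) * lam (ℓ + 1))
    (E : ℕ → ℕ → ℕ)
    (hE : ∀ i, 1 ≤ i → i ≤ s → ∀ ℓ, 1 ≤ ℓ → ℓ ≤ i → (E i ℓ : ℚ) = (e i : ℚ) * lam ℓ)
    (φs : ℕ → ℕ → Polynomial ℂ)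
    (hφs : ∀ i, 1 ≤ i → i ≤ s → ∀ ℓ, 1 ≤ ℓ → ℓ ≤ i →
      (φs i ℓ).comp (Polynomial.X ^ (e s / e i)) = φ ℓ)
    (Y : ℕ → Polynomial ℂ)
    (hY : ∀ i, 1 ≤ i → i ≤ s →
      Y i = ∑ ℓ ∈ Finset.Icc 1 i, (Polynomial.C (c ℓ) * Polynomial.X ^ E i ℓ + φs i ℓ))
    (mu : ℕ → ℚ)
    (hmu : ∀ i, 1 ≤ i → i ≤ s →
      (φ i ≠ 0 → mu i = ((φs i i).natDegree : ℚ) / (e i : ℚ)) ∧ (φ i = 0 → mu i = lam i))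
    (NN : ℕ → Set (ℕ × ℕ))
    (hNN : ∀ i, 1 ≤ i → i ≤ s → NN i = {p : ℕ × ℕ |
      (e i : ℚ) * ((kk 1 : ℚ) * lam 1) ≤ (kk 1 : ℚ) * p.1 + ((kk 1 : ℚ) * lam 1) * p.2 ∧
      (e i : ℚ) * p.1 + ((e i : ℚ) * mu i) * p.2 ≤ (e i : ℚ) * ((e i : ℚ) * mu i)}) :
    ∀ i, 1 ≤ i → i ≤ s → ∀ fi g : Polynomial (Polynomial ℂ),
      (fi.Monic ∧ fi.natDegree = e i ∧ ∀ ℓ < e i, (fi.coeff ℓ).coeff 0 = 0) →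
      iotaP (e i) (Y i) fi = 0 →
      (∀ α β : ℕ, (fi.coeff β).coeff α ≠ 0 → (α, β) ∈ NN i) →
      g ≠ 0 → iotaP (e i) (Y i) g = 0 →
      (∀ α β : ℕ, (g.coeff β).coeff α ≠ 0 → (α, β) ∈ NN i) →
      ∃ a : ℂ, a ≠ 0 ∧ g = Polynomial.C (Polynomial.C a) * fi := by
  rintro i hi1 his fi g ⟨hfmonic, hfdeg, -⟩ hfι - hg0 hgι hgsupp
  have hlam : StrictMonoOn lam (Set.Icc 1 s) := strictMonoOn_Icc_of_lt_add_one hlam_mono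
  have hepos := pos_of_eq_mul_pred he he0 fun j h1 h2 => (hkk j h1 h2).1.1
  have hei := hepos i his
  have heiQ : (0 : ℚ) < e i := by exact_mod_cast hei
  have hcoeffY : ∀ ℓ ∈ Set.Icc 1 i, (Y i).coeff (E i ℓ) = c ℓ := fun ℓ hℓ => by
    rw [hY i hi1 his]
    exact coeff_sum_C_mul_X_pow_add_of_comp_X_pow_eq c his hlam hei (hepos s le_rfl)
      (dvd_of_eq_mul_pred he his le_rfl) hφord hφdeg (hE i hi1 his) (hφs i hi1 his) hℓ
  have hmem : (e i : ℚ)⁻¹ ∈ AddSubgroup.closure ({1} ∪ lam '' Set.Icc 1 i) := by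
    rw [← hM, eq_zmultiples_inv_of_isLeast hM hkk he0 he i his]
    exact AddSubgroup.mem_zmultiples _
  have hker : ∀ q, q.natDegree < e i → iotaP (e i) (Y i) q = 0 → q = 0 := fun q =>
    eq_zero_of_iotaP_eq_zero hei fun ζ hζ hfix => eq_one_of_comp_C_mul_X_eq_self hei.ne' hmem
      (hE i hi1 his) (fun ℓ hℓ => hcoeffY ℓ hℓ ▸ hc ℓ hℓ.1 (hℓ.2.trans his)) hζ hfix
  have hmu_pos : 0 < mu i := by
    obtain ⟨hne, heq⟩ := hmu i hi1 his
    by_cases hφi : φ i = 0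
    · rw [heq hφi]
      exact one_pos.trans (hlam1.trans_le (hlam.monotoneOn ⟨le_rfl, hi1.trans his⟩ ⟨hi1, his⟩ hi1))
    · have hdeg := natDegree_pos_of_comp_X_pow_eq (hφs i hi1 his i hi1 le_rfl) (hφ0 i hi1 his) hφi
      rw [hne hφi]
      exact div_pos (by exact_mod_cast hdeg) heiQ
  obtain ⟨hgdeg, hgtop⟩ := natDegree_le_and_coeff_eq_C_of_weighted_le hmu_pos fun α β h => by
    have := (hNN i hi1 his ▸ hgsupp α β h).2
    exact le_of_mul_le_mul_left (by linear_combination this) heiQ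
  have hgf := eq_C_coeff_mul_of_map_eq_zero (eval₂RingHom _ (Y i)) hfmonic hfι hgι
    (hfdeg ▸ hgdeg) (hfdeg ▸ hker)
  rw [hfdeg, hgtop] at hgf
  exact ⟨_, fun h => hg0 (by rw [hgf, h, C_0, C_0, zero_mul]), hgf⟩

theorem stmt_12
    (s : ℕ) (hs : 1 ≤ s)
    (lam : ℕ → ℚ) (hlam1 : 1 < lam 1)
    (hlam_mono : ∀ i, 1 ≤ i → i < s → lam i < lam (i + 1))
    (M : ℕ → AddSubgroup ℚ)
    (hM : ∀ i, M i = AddSubgroup.closure ({1} ∪ lam '' Set.Icc 1 i))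
    (hlamM : ∀ i, 1 ≤ i → i ≤ s → lam i ∉ M (i - 1))
    (kk : ℕ → ℕ)
    (hkk : ∀ i, 1 ≤ i → i ≤ s →
      IsLeast {m : ℕ | 0 < m ∧ (m : ℚ) * lam i ∈ M (i - 1)} (kk i))
    (e : ℕ → ℕ) (he0 : e 0 = 1)
    (he : ∀ i, 1 ≤ i → i ≤ s → e i = kk i * e (i - 1))
    (gam : ℕ → ℕ → ℚ)
    (hgam1 : ∀ j, 1 ≤ j → j ≤ s → gam j 1 = (e j : ℚ) * lam 1)
    (hgam : ∀ j, 1 ≤ j → j ≤ s → ∀ ℓ, 1 ≤ ℓ → ℓ ≤ j - 1 →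
      gam j (ℓ + 1) = (kk ℓ : ℚ) * gam j ℓ - (e j : ℚ) * lam ℓ + (e j : ℚ) * lam (ℓ + 1))
    (c : ℕ → ℂ) (hc : ∀ ℓ, 1 ≤ ℓ → ℓ ≤ s → c ℓ ≠ 0)
    (φ : ℕ → Polynomial ℂ)
    (hφ0 : ∀ ℓ, 1 ≤ ℓ → ℓ ≤ s → (φ ℓ).coeff 0 = 0)
    (hφsupp : ∀ ℓ, 1 ≤ ℓ → ℓ ≤ s → ∀ a ∈ (φ ℓ).support,
      ∃ m ∈ M ℓ, (a : ℚ) = (e s : ℚ) * m)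
    (hφord : ∀ ℓ, 1 ≤ ℓ → ℓ ≤ s → ∀ a ∈ (φ ℓ).support, (e s : ℚ) * lam ℓ < (a : ℚ))
    (hφdeg : ∀ ℓ, 1 ≤ ℓ → ℓ < s → ∀ a ∈ (φ ℓ).support, (a : ℚ) < (e s : ℚ) * lam (ℓ + 1))
    (E : ℕ → ℕ → ℕ)
    (hE : ∀ i, 1 ≤ i → i ≤ s → ∀ ℓ, 1 ≤ ℓ → ℓ ≤ i → (E i ℓ : ℚ) = (e i : ℚ) * lam ℓ)
    (φs : ℕ → ℕ → Polynomial ℂ)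
    (hφs : ∀ i, 1 ≤ i → i ≤ s → ∀ ℓ, 1 ≤ ℓ → ℓ ≤ i →
      (φs i ℓ).comp (Polynomial.X ^ (e s / e i)) = φ ℓ)
    (Y : ℕ → Polynomial ℂ)
    (hY : ∀ i, 1 ≤ i → i ≤ s →
      Y i = ∑ ℓ ∈ Finset.Icc 1 i, (Polynomial.C (c ℓ) * Polynomial.X ^ E i ℓ + φs i ℓ))
    (mu : ℕ → ℚ)
    (hmu : ∀ i, 1 ≤ i → i ≤ s →
      (φ i ≠ 0 → mu i = ((φs i i).natDegree : ℚ) / (e i : ℚ)) ∧ (φ i = 0 → mu i = lam i))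
    (NN : ℕ → Set (ℕ × ℕ))
    (hNN : ∀ i, 1 ≤ i → i ≤ s → NN i = {p : ℕ × ℕ |
      (e i : ℚ) * ((kk 1 : ℚ) * lam 1) ≤ (kk 1 : ℚ) * p.1 + ((kk 1 : ℚ) * lam 1) * p.2 ∧
      (e i : ℚ) * p.1 + ((e i : ℚ) * mu i) * p.2 ≤ (e i : ℚ) * ((e i : ℚ) * mu i)}) :
    ∀ i, 1 ≤ i → i ≤ s → ∀ fi g : Polynomial (Polynomial ℂ),
      (fi.Monic ∧ fi.natDegree = e i ∧ ∀ ℓ < e i, (fi.coeff ℓ).coeff 0 = 0) →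
      iotaP (e i) (Y i) fi = 0 →
      (∀ α β : ℕ, (fi.coeff β).coeff α ≠ 0 → (α, β) ∈ NN i) →
      g ≠ 0 → iotaP (e i) (Y i) g = 0 →
      (∀ α β : ℕ, (g.coeff β).coeff α ≠ 0 → (α, β) ∈ NN i) →
      ∃ a : ℂ, a ≠ 0 ∧ g = Polynomial.C (Polynomial.C a) * fi :=
  stmt_12_general s lam hlam1 hlam_mono M hM kk hkk e he0 he c hc φ hφ0 hφord hφdeg E hE φs hφs Y hY
    mu hmu NN hNN
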